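/- The z-rule of LRP with relevances weighted by activations is equivalent to Gradient ⊙ Input: for a linear layer z_{ij} = w_{ij} a_i (with a ∈ R^m the input activation, W ∈ R^{m×n}) and upper relevance r ∈ R^n with r_j = (W^T a)_j · g_j for some vector g ∈ R^n, the LRP z-rule r'_i = Σ_j (z_{ij} / Σ_k z_{kj}) r_j equals a_i · (W g)_i, provided Σ_k z_{kj} ≠ 0 for all j. -/
import Mathlib


/-- The LRP z-rule is equivalent to Gradient ⊙ Input: if the incoming relevance
factors as `r j = (Wᵀ a) j * g j` and all column sums `∑ k, W k j * a k` are
nonzero, then the redistributed relevance at input `i` equals `a i * (W g) i`. -/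
theorem lrp_z_rule_eq_grad_times_input {m n : ℕ}
    (W : Matrix (Fin m) (Fin n) ℝ) (a : Fin m → ℝ) (g : Fin n → ℝ)
    (r : Fin n → ℝ) (hr : ∀ j, r j = (∑ k, W k j * a k) * g j)
    (hz : ∀ j, (∑ k, W k j * a k) ≠ 0) :
    ∀ i, (∑ j, (W i j * a i / ∑ k, W k j * a k) * r j) =
      a i * ∑ j, W i j * g j := by
  intro i
  rw [Finset.mul_sum]
  apply Finset.sum_congr rfl
  intro j _
  rw [hr j]
  field_simp [hz j]
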